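/- Fix constants c₁, c₂ > 0 and let f(x) = (1/√2) e^{−c₁ x}( x − (√2/2) c₂ x² ) for x ≥ 0. Then f attains a strict local maximum A_max > 0 at some x_max ∈ (0, √2/c₂), and f is strictly increasing on [0, x_max]. Moreover, for any 0 ≤ A < A_max, letting X_max ∈ [0, x_max) denote the unique root of f(x) = A in [0, x_max], the following trapping property holds: if I is an interval containing 0 and g : I → [0,∞) is continuous with g(0) ≤ x_max and f(g(t)) ≤ A for all t ∈ I, then g(t) ≤ X_max for all t ∈ I. -/

import Mathlib

/-!
Common framework: we model periodic functions on the torus 𝕋 = ℝ/2πℤ by their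
sequences of Fourier coefficients `u : ℤ → ℂ`.  Products of functions become
convolutions of coefficients, the analytic Sobolev norm is an exponentially
weighted ℓ²-sum, and the Hardy space L²₊ is modelled as `lp`-space over the
positive integer frequencies.
-/

noncomputable section
open Filter Set
open scoped BigOperators Topology

namespace BO

/-- Japanese bracket `⟨n⟩ = (1+n²)^{1/2}`. -/
def jb (n : ℤ) : ℝ := Real.sqrt (1 + (n : ℝ) ^ 2)

/-- The weight `⟨n⟩^s e^{ρ|n|}` of the analytic Sobolev space `H^{ρ,s}`. -/
def wt (ρ s : ℝ) (n : ℤ) : ℝ := jb n ^ s * Real.exp (ρ * |(n : ℝ)|)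

/-- Membership in `H^{ρ,s}` (for the Fourier coefficients `u`). -/
def MemH (ρ s : ℝ) (u : ℤ → ℂ) : Prop :=
  Summable fun n : ℤ => wt ρ s n ^ 2 * ‖u n‖ ^ 2

/-- The analytic Sobolev norm `‖u‖_{ρ,s}`. -/
def anorm (ρ s : ℝ) (u : ℤ → ℂ) : ℝ :=
  Real.sqrt (∑' n : ℤ, wt ρ s n ^ 2 * ‖u n‖ ^ 2)

/-- The (normalized) `L²` norm. -/
def l2norm (u : ℤ → ℂ) : ℝ := Real.sqrt (∑' n : ℤ, ‖u n‖ ^ 2)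

/-- `u` is the coefficient sequence of a real-valued function. -/
def IsReal (u : ℤ → ℂ) : Prop := ∀ n : ℤ, u (-n) = (starRingEnd ℂ) (u n)

/-- Fourier coefficients of the pointwise product (= convolution). -/
def fmul (u v : ℤ → ℂ) : ℤ → ℂ := fun n => ∑' m : ℤ, u (n - m) * v m

/-- Projection onto positive frequencies, `C₊`. -/
def Cplus (u : ℤ → ℂ) : ℤ → ℂ := fun n => if 0 < n then u n else 0

/-- Projection onto negative frequencies, `C₋`. -/
def Cminus (u : ℤ → ℂ) : ℤ → ℂ := fun n => if n < 0 then u n else 0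

/-- Projection onto the zero mode (spatial mean), `P₀`. -/
def P0 (u : ℤ → ℂ) : ℤ → ℂ := fun n => if n = 0 then u 0 else 0

/-- Membership in the positive-frequency space `H₊^{ρ,s}`. -/
def MemHplus (ρ s : ℝ) (u : ℤ → ℂ) : Prop :=
  MemH ρ s u ∧ ∀ n : ℤ, n ≤ 0 → u n = 0

/-- Coefficients of the constant function `1`. -/
def delta0 : ℤ → ℂ := fun n => if n = 0 then 1 else 0

/-- Spatial derivative `∂ₓ` (multiplier `i n`). -/
def dx (u : ℤ → ℂ) : ℤ → ℂ := fun n => Complex.I * (n : ℂ) * u n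

/-- Coefficients of the complex conjugate function. -/
def conjFun (u : ℤ → ℂ) : ℤ → ℂ := fun n => (starRingEnd ℂ) (u (-n))

/-- The Toeplitz operator `T_u f = C₊(uf)`. -/
def Toep (u f : ℤ → ℂ) : ℤ → ℂ := Cplus (fmul u f)

/-- The Lax operator `L_u f = -2i∂ₓ f + C₊(uf)` (multiplier `2n` plus Toeplitz). -/
def LaxOp (u f : ℤ → ℂ) : ℤ → ℂ := fun n => 2 * (n : ℂ) * f n + Toep u f n

/-- The free resolvent `R₀(κ) = (L₀+κ)⁻¹` on positive frequencies. -/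
def R0 (κ : ℝ) (u : ℤ → ℂ) : ℤ → ℂ :=
  fun n => if 0 < n then (2 * (n : ℂ) + (κ : ℂ))⁻¹ * u n else 0

/-- The algebra constant `C_s = 2^{s+1} (Σ_k ⟨k⟩^{-2s})^{1/2}` of `H^{ρ,s}`. -/
def Cs (s : ℝ) : ℝ := (2 : ℝ) ^ (s + 1) * Real.sqrt (∑' k : ℤ, jb k ^ (-(2 * s)))

/-- Positive integer frequencies. -/
abbrev PosZ := {n : ℤ // 0 < n}

/-- The Hardy space `L²₊(𝕋)` in Fourier coordinates. -/
abbrev Hardy := lp (fun _ : PosZ => ℂ) 2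

/-- The `H¹₊` subset of the Hardy space. -/
def H1set : Set Hardy := {f | Summable fun n : PosZ => (1 + ((n : ℤ) : ℝ) ^ 2) * ‖f n‖ ^ 2}

/-- `L²` norm of a positive-frequency coefficient sequence. -/
def l2p (f : PosZ → ℂ) : ℝ := Real.sqrt (∑' n : PosZ, ‖f n‖ ^ 2)

/-- Action of the Lax operator `L_v` on positive-frequency coefficients. -/
def laxC (v : ℤ → ℂ) (f : PosZ → ℂ) : PosZ → ℂ :=
  fun n => 2 * ((n : ℤ) : ℂ) * f n + ∑' m : PosZ, v ((n : ℤ) - (m : ℤ)) * f m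

/-- Exponentially shifted symbol: `(eshift σ v)(k) = e^{σ k} v(k)`. -/
def eshift (σ : ℝ) (v : ℤ → ℂ) : ℤ → ℂ := fun k => (Real.exp (σ * (k : ℝ)) : ℂ) * v k

/-- `ψ = e^{(ρ/2)L_v} v₊`, characterized by the backward flow
`φ(τ) = e^{(ρ/2-τ)L_v} v₊`: a strongly `C¹` curve in `H¹₊ ⊂ L²₊` with
`φ' = -L_v φ`, `φ(0) = ψ` and `φ(ρ/2) = v₊`. -/
def IsSpecState (ρ : ℝ) (v : ℤ → ℂ) (ψ : PosZ → ℂ) : Prop :=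
  ∃ φ : ℝ → PosZ → ℂ,
    φ 0 = ψ ∧
    (∀ n : PosZ, φ (ρ / 2) n = v (n : ℤ)) ∧
    (∀ τ ∈ Set.Icc (0 : ℝ) (ρ / 2),
      Summable fun n : PosZ => (1 + ((n : ℤ) : ℝ) ^ 2) * ‖φ τ n‖ ^ 2) ∧
    (∀ τ ∈ Set.Icc (0 : ℝ) (ρ / 2),
      Filter.Tendsto
        (fun τ' : ℝ =>
          l2p (fun n => φ τ' n - φ τ n + ((τ' - τ : ℝ) : ℂ) * laxC v (φ τ) n) / |τ' - τ|)
        (nhdsWithin τ (Set.Icc (0 : ℝ) (ρ / 2) \ {τ})) (nhds 0))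

/-- The exponential spectral energy `E_ρ(v) = ‖ψ_v‖² + ‖(1/2)L_v ψ_v‖²`
expressed through the state `ψ = e^{(ρ/2)L_v}v₊`. -/
def Erho (v : ℤ → ℂ) (ψ : PosZ → ℂ) : ℝ :=
  (∑' n : PosZ, ‖ψ n‖ ^ 2) + (1 / 4) * ∑' n : PosZ, ‖laxC v ψ n‖ ^ 2

/-- The geometric constant `c₁ = (1/2)(π²/6 - (π coth π - 1)/2)^{1/2}`. -/
def c1const : ℝ :=
  (1 / 2) * Real.sqrt (Real.pi ^ 2 / 6 -
    (Real.pi * (Real.cosh Real.pi / Real.sinh Real.pi) - 1) / 2)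

/-- The geometric constant `c₂ = (π coth π - 1)^{1/2}`. -/
def c2const : ℝ :=
  Real.sqrt (Real.pi * (Real.cosh Real.pi / Real.sinh Real.pi) - 1)

/-- The geometric bounding function `f(x) = (1/√2) e^{-c₁x}(x - (√2/2)c₂x²)`. -/
def fbar (c₁ c₂ x : ℝ) : ℝ :=
  (1 / Real.sqrt 2) * Real.exp (-c₁ * x) * (x - (Real.sqrt 2 / 2) * c₂ * x ^ 2)

/-- `m` is the resolvent gauge variable `m(κ,u) = (L_u+κ)⁻¹ u₊`:
the unique positive-frequency `ℓ²` solution of `(L_u+κ)m = u₊`. -/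
def IsGauge (κ : ℝ) (u m : ℤ → ℂ) : Prop :=
  (∀ n : ℤ, n ≤ 0 → m n = 0) ∧ (Summable fun n : ℤ => ‖m n‖ ^ 2) ∧
  ∀ n : ℤ, LaxOp u m n + (κ : ℂ) * m n = Cplus u n

-- The gauge variable, selected by choice (it is unique for `κ` large).
open scoped Classical in
def gauge (κ : ℝ) (u : ℤ → ℂ) : ℤ → ℂ :=
  if h : ∃ m : ℤ → ℂ, IsGauge κ u m then h.choose else 0

/-- The spectral generating functional `β(κ;u) = ⟨u₊, m(κ,u)⟩_{L²}`. -/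
def beta (κ : ℝ) (u : ℤ → ℂ) : ℂ :=
  ∑' n : ℤ, Cplus u n * (starRingEnd ℂ) (gauge κ u n)

/-- Right-hand side of the Benjamin–Ono equation,
`∂ₜ u = -H∂ₓₓu - u∂ₓu` (the multiplier of `H∂ₓₓ` is `i n |n|`). -/
def BOrhs (u : ℤ → ℂ) : ℤ → ℂ :=
  fun n => -(Complex.I * (n : ℂ) * ((|n| : ℤ) : ℂ) * u n) - fmul u (dx u) n

/-- `u` is a global solution of the regularized `H_κ` flow
`∂ₜu = -(κ/2)∂ₓu + (κ²/2)∂ₓ(m + m̄ - |m|²)` with data `u₀`,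
continuous in time with values in `H₀^{ρ,1}`. -/
def IsHkFlow (ρ κ : ℝ) (u₀ : ℤ → ℂ) (u : ℝ → ℤ → ℂ) : Prop :=
  u 0 = u₀ ∧
  (∀ t : ℝ, MemH ρ 1 (u t) ∧ u t 0 = 0 ∧ IsReal (u t)) ∧
  (∀ t₀ : ℝ, Filter.Tendsto (fun t => anorm ρ 1 (fun n => u t n - u t₀ n))
      (nhds t₀) (nhds 0)) ∧
  (∀ t : ℝ, ∃ m : ℤ → ℂ, IsGauge κ (u t) m ∧
    ∀ n : ℤ, HasDerivAt (fun t' => u t' n)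
      (-((κ : ℂ) / 2) * (Complex.I * (n : ℂ) * u t n) +
        ((κ : ℂ) ^ 2 / 2) * (Complex.I * (n : ℂ) *
          (m n + conjFun m n - fmul m (conjFun m) n))) t)

/-- `u` is a global classical solution of the Benjamin–Ono equation with data `u₀`:
for every `T > 0` and `ε ∈ (0,ρ/6)` it lies in
`C¹([-T,T]; H₀^{ρ-3ε,1}) ∩ C([-T,T]; H₀^{ρ-ε,1})` and satisfies
`∂ₜu = -H∂ₓₓu - u∂ₓu` (time derivative in `H₀^{ρ-3ε,1}`). -/
def IsBOSol (ρ : ℝ) (u₀ : ℤ → ℂ) (u : ℝ → ℤ → ℂ) : Prop :=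
  u 0 = u₀ ∧
  (∀ t : ℝ, u t 0 = 0 ∧ IsReal (u t)) ∧
  ∀ T > (0 : ℝ), ∀ ε ∈ Set.Ioo (0 : ℝ) (ρ / 6),
    (∀ t ∈ Set.Icc (-T) T, MemH (ρ - ε) 1 (u t)) ∧
    (∀ t₀ ∈ Set.Icc (-T) T,
      Filter.Tendsto (fun t => anorm (ρ - ε) 1 (fun n => u t n - u t₀ n))
        (nhdsWithin t₀ (Set.Icc (-T) T)) (nhds 0)) ∧
    (∀ t₀ ∈ Set.Icc (-T) T, MemH (ρ - 3 * ε) 1 (BOrhs (u t₀)) ∧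
      Filter.Tendsto (fun t =>
          anorm (ρ - 3 * ε) 1
            (fun n => u t n - u t₀ n - ((t - t₀ : ℝ) : ℂ) * BOrhs (u t₀) n) / |t - t₀|)
        (nhdsWithin t₀ (Set.Icc (-T) T \ {t₀})) (nhds 0)) ∧
    (∀ t₀ ∈ Set.Icc (-T) T,
      Filter.Tendsto (fun t => anorm (ρ - 3 * ε) 1 (fun n => BOrhs (u t) n - BOrhs (u t₀) n))
        (nhdsWithin t₀ (Set.Icc (-T) T)) (nhds 0))


/-! With `a = (√2/2) c₂`, `fbar' x = (1/√2) e^{-c₁x} (c₁ a x² - (c₁ + 2a) x + 1)`. The quadratic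
factor is `1` at `0` and `-1` at `1/a = √2/c₂`, so its smaller root `x_max` lies in `(0, √2/c₂)`;
`fbar` increases up to `x_max` and decreases on `[x_max, √2/c₂]`. For `0 ≤ A < fbar x_max` we get
`fbar > A` on the gap `(X_max, x_max]`, and by the intermediate value theorem a continuous
trajectory starting at or below `x_max` that never enters the gap cannot cross it. -/

theorem _root_.IsPreconnected.forall_le_of_mapsTo_compl_Ioc {X α : Type*} [TopologicalSpace X]
    [LinearOrder α] [TopologicalSpace α] [OrderClosedTopology α] {s : Set X}
    (hs : IsPreconnected s) {f : X → α} (hf : ContinuousOn f s) {a b : α} (hab : a < b)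
    {x₀ : X} (hx₀ : x₀ ∈ s) (hfx₀ : f x₀ ≤ b) (hgap : MapsTo f s (Ioc a b)ᶜ) :
    ∀ x ∈ s, f x ≤ a := by
  intro x hx
  by_contra! hax
  rcases le_or_gt (f x) b with hxb | hbx
  · exact hgap hx ⟨hax, hxb⟩
  · obtain ⟨y, hy, hfy⟩ := hs.intermediate_value hx₀ hx hf ⟨hfx₀, hbx.le⟩
    exact hgap hy ⟨hfy ▸ hab, hfy.le⟩

section CriticalPoints

variable {c a : ℝ}

def critLow (c a : ℝ) : ℝ := (c + 2 * a - √(c ^ 2 + 4 * a ^ 2)) / (2 * c * a)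

def critHigh (c a : ℝ) : ℝ := (c + 2 * a + √(c ^ 2 + 4 * a ^ 2)) / (2 * c * a)

theorem quadratic_eq_mul_sub_critLow_mul_sub_critHigh (hc : 0 < c) (ha : 0 < a) (x : ℝ) :
    c * a * x ^ 2 - (c + 2 * a) * x + 1 = c * a * (x - critLow c a) * (x - critHigh c a) := by
  have hs : √(c ^ 2 + 4 * a ^ 2) ^ 2 = c ^ 2 + 4 * a ^ 2 := Real.sq_sqrt (by positivity)
  unfold critLow critHigh
  generalize √(c ^ 2 + 4 * a ^ 2) = s at hs ⊢
  field_simp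
  linear_combination hs

theorem critLow_pos (hc : 0 < c) (ha : 0 < a) : 0 < critLow c a := by
  have hs : √(c ^ 2 + 4 * a ^ 2) < c + 2 * a :=
    (Real.sqrt_lt' (by positivity)).2 (by nlinarith)
  exact div_pos (by linarith) (by positivity)

theorem critLow_lt_critHigh (hc : 0 < c) (ha : 0 < a) : critLow c a < critHigh c a := by
  have hs : 0 < √(c ^ 2 + 4 * a ^ 2) := Real.sqrt_pos.2 (by positivity)
  exact div_lt_div_of_pos_right (by linarith) (by positivity)

theorem inv_mem_Ioo_critLow_critHigh (hc : 0 < c) (ha : 0 < a) :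
    a⁻¹ ∈ Ioo (critLow c a) (critHigh c a) := by
  have hlt := critLow_lt_critHigh hc ha
  have hval : c * a * (a⁻¹ - critLow c a) * (a⁻¹ - critHigh c a) = -1 := by
    rw [← quadratic_eq_mul_sub_critLow_mul_sub_critHigh hc ha]
    field_simp
    ring
  have huv : (a⁻¹ - critLow c a) * (a⁻¹ - critHigh c a) < 0 := by
    nlinarith [mul_pos hc ha]
  rcases mul_neg_iff.1 huv with ⟨hlow, hhigh⟩ | ⟨hlow, hhigh⟩
  · exact ⟨sub_pos.1 hlow, sub_neg.1 hhigh⟩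
  · linarith

end CriticalPoints

section Fbar

variable {c₁ c₂ : ℝ}

def fbarPeak (c₁ c₂ : ℝ) : ℝ := critLow c₁ (√2 / 2 * c₂)

theorem hasDerivAt_fbar (c₁ c₂ x : ℝ) :
    HasDerivAt (fbar c₁ c₂) (1 / √2 * Real.exp (-c₁ * x) *
      (c₁ * (√2 / 2 * c₂) * x ^ 2 - (c₁ + 2 * (√2 / 2 * c₂)) * x + 1)) x := by
  have hexp : HasDerivAt (fun y => 1 / √2 * Real.exp (-c₁ * y))
      (1 / √2 * (Real.exp (-c₁ * x) * (-c₁))) x := by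
    simpa using (((hasDerivAt_id x).const_mul (-c₁)).exp).const_mul (1 / √2)
  have hpoly : HasDerivAt (fun y => y - √2 / 2 * c₂ * y ^ 2) (1 - √2 / 2 * c₂ * (2 * x)) x :=
    ((hasDerivAt_id' x).sub ((hasDerivAt_pow 2 x).const_mul _)).congr_deriv (by simp)
  exact (hexp.mul hpoly).congr_deriv (by ring)

theorem continuous_fbar (c₁ c₂ : ℝ) : Continuous (fbar c₁ c₂) :=
  continuous_iff_continuousAt.2 fun x => (hasDerivAt_fbar c₁ c₂ x).continuousAt

theorem fbar_zero (c₁ c₂ : ℝ) : fbar c₁ c₂ 0 = 0 := by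
  simp [fbar]

theorem fbarPeak_pos (h₁ : 0 < c₁) (h₂ : 0 < c₂) : 0 < fbarPeak c₁ c₂ :=
  critLow_pos h₁ (by positivity)

theorem sqrt_two_div_eq_inv (c₂ : ℝ) : √2 / c₂ = (√2 / 2 * c₂)⁻¹ := by
  rw [mul_inv, inv_div, Real.div_sqrt, div_eq_mul_inv]

theorem fbarPeak_lt_sqrt_two_div (h₁ : 0 < c₁) (h₂ : 0 < c₂) : fbarPeak c₁ c₂ < √2 / c₂ := by
  rw [sqrt_two_div_eq_inv]
  exact (inv_mem_Ioo_critLow_critHigh h₁ (by positivity)).1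

theorem strictMonoOn_fbar (h₁ : 0 < c₁) (h₂ : 0 < c₂) :
    StrictMonoOn (fbar c₁ c₂) (Iic (fbarPeak c₁ c₂)) := by
  have ha : 0 < √2 / 2 * c₂ := by positivity
  have hhigh : fbarPeak c₁ c₂ < critHigh c₁ (√2 / 2 * c₂) := critLow_lt_critHigh h₁ ha
  refine strictMonoOn_of_deriv_pos (convex_Iic _) (continuous_fbar c₁ c₂).continuousOn ?_
  intro x hx
  rw [interior_Iic, mem_Iio] at hx
  rw [(hasDerivAt_fbar c₁ c₂ x).deriv, quadratic_eq_mul_sub_critLow_mul_sub_critHigh h₁ ha]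
  exact mul_pos (by positivity) (mul_pos_of_neg_of_neg
    (mul_neg_of_pos_of_neg (mul_pos h₁ ha) (sub_neg.2 hx)) (by linarith))

theorem strictAntiOn_fbar (h₁ : 0 < c₁) (h₂ : 0 < c₂) :
    StrictAntiOn (fbar c₁ c₂) (Icc (fbarPeak c₁ c₂) (√2 / c₂)) := by
  have ha : 0 < √2 / 2 * c₂ := by positivity
  have hhigh : √2 / c₂ < critHigh c₁ (√2 / 2 * c₂) := by
    rw [sqrt_two_div_eq_inv]
    exact (inv_mem_Ioo_critLow_critHigh h₁ ha).2
  refine strictAntiOn_of_deriv_neg (convex_Icc _ _) (continuous_fbar c₁ c₂).continuousOn ?_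
  intro x hx
  rw [interior_Icc] at hx
  rw [(hasDerivAt_fbar c₁ c₂ x).deriv, quadratic_eq_mul_sub_critLow_mul_sub_critHigh h₁ ha]
  exact mul_neg_of_pos_of_neg (by positivity) (mul_neg_of_pos_of_neg
    (mul_pos (mul_pos h₁ ha) (sub_pos.2 hx.1)) (by linarith [hx.2]))

theorem eventually_fbar_lt_fbarPeak (h₁ : 0 < c₁) (h₂ : 0 < c₂) :
    ∀ᶠ y in 𝓝[≠] fbarPeak c₁ c₂, fbar c₁ c₂ y < fbar c₁ c₂ (fbarPeak c₁ c₂) := by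
  have hlt := fbarPeak_lt_sqrt_two_div h₁ h₂
  filter_upwards [mem_nhdsWithin_of_mem_nhds (Iio_mem_nhds hlt), self_mem_nhdsWithin]
    with y hy hne
  rcases lt_or_gt_of_ne hne with h | h
  · exact strictMonoOn_fbar h₁ h₂ h.le self_mem_Iic h
  · exact strictAntiOn_fbar h₁ h₂ ⟨le_rfl, hlt.le⟩ ⟨h.le, hy.le⟩ h

end Fbar

/-- The geometric rigidification (barrier) lemma for
`f(x) = (1/√2)e^{-c₁x}(x - (√2/2)c₂x²)`: `f` attains a strict local maximum
`A_max > 0` at some `x_max ∈ (0, √2/c₂)`, is strictly increasing on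
`[0,x_max]`, and for `0 ≤ A < A_max` the unique root `X_max ∈ [0,x_max)` of
`f = A` in `[0,x_max]` traps any continuous nonnegative trajectory `g` with
`g(0) ≤ x_max` and `f∘g ≤ A`. -/
theorem barrier_lemma (c₁ c₂ : ℝ) (h₁ : 0 < c₁) (h₂ : 0 < c₂) :
    ∃ xmax : ℝ, 0 < xmax ∧ xmax < Real.sqrt 2 / c₂ ∧
      0 < fbar c₁ c₂ xmax ∧
      (∀ᶠ y in nhdsWithin xmax {xmax}ᶜ, fbar c₁ c₂ y < fbar c₁ c₂ xmax) ∧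
      StrictMonoOn (fbar c₁ c₂) (Set.Icc 0 xmax) ∧
      ∀ A : ℝ, 0 ≤ A → A < fbar c₁ c₂ xmax →
        ∃ Xmax : ℝ, Xmax ∈ Set.Ico 0 xmax ∧ fbar c₁ c₂ Xmax = A ∧
          (∀ y ∈ Set.Icc 0 xmax, fbar c₁ c₂ y = A → y = Xmax) ∧
          ∀ I : Set ℝ, I.OrdConnected → (0 : ℝ) ∈ I →
            ∀ g : ℝ → ℝ, ContinuousOn g I → (∀ t ∈ I, 0 ≤ g t) →
              g 0 ≤ xmax → (∀ t ∈ I, fbar c₁ c₂ (g t) ≤ A) →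
              ∀ t ∈ I, g t ≤ Xmax := by
  have hpeak := fbarPeak_pos h₁ h₂
  have hmono := strictMonoOn_fbar h₁ h₂
  have hfpeak : 0 < fbar c₁ c₂ (fbarPeak c₁ c₂) := by
    simpa [fbar_zero] using hmono hpeak.le self_mem_Iic hpeak
  refine ⟨fbarPeak c₁ c₂, hpeak, fbarPeak_lt_sqrt_two_div h₁ h₂, hfpeak,
    eventually_fbar_lt_fbarPeak h₁ h₂, hmono.mono Icc_subset_Iic_self, ?_⟩
  intro A hA₀ hA
  obtain ⟨X, hX, rfl⟩ := intermediate_value_Ico hpeak.le (continuous_fbar c₁ c₂).continuousOn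
    ⟨(fbar_zero c₁ c₂).symm ▸ hA₀, hA⟩
  refine ⟨X, hX, rfl, fun y hy hfy => hmono.injOn hy.2 hX.2.le hfy, ?_⟩
  intro I hI hI₀ g hg _ hg₀ hgA
  refine hI.isPreconnected.forall_le_of_mapsTo_compl_Ioc hg hX.2 hI₀ hg₀ ?_
  exact fun t ht hmem => (hgA t ht).not_gt (hmono hX.2.le hmem.2 hmem.1)

end BO
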